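/- arXiv:1706.01051 — 2 statements merged into one kernel-verified Lean document; each statement's English description precedes it below -/
import Mathlib

section
/- For every k ∈ SO(n-1) and every x ∈ ℝ^{n-1}, if m denotes the block-diagonal matrix diag(1, k, 1) ∈ GL(n+1, ℝ), then m · u(x) · m⁻¹ = u(k·x), where k·x denotes the standard action of SO(n-1) on ℝ^{n-1}. -/
open scoped Matrix

/-!
Reindex `Fin (n + 1)` as `Fin 2 ⊕ Fin (n - 1)`, the two extreme indices `0, n` first. Then `m`
is the block matrix `fromBlocks 1 0 0 k`, and `u(x)` has diagonal blocks `[[1, ‖x‖²], [0, 1]]`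
and `1` and off-diagonal blocks the row `x` and the column `2x`. Block multiplication reduces
`m · u(x) = u(k·x) · m` to `‖k·x‖ = ‖x‖`, `(k·x)ᵀ k = xᵀ` and `k (2x) = 2 (k·x)`, all
consequences of `kᵀ k = 1`, and `m` is invertible since `det m = det k`.
-/

noncomputable def uMat (n : ℕ) (x : Fin (n - 1) → ℝ) :
    Matrix (Fin (n + 1)) (Fin (n + 1)) ℝ :=
  Matrix.of fun i j =>
    if i = j then 1
    else if i.val = 0 then
      (if j.val = n then ∑ l, x l ^ 2
       else if h : 1 ≤ j.val ∧ j.val - 1 < n - 1 then x ⟨j.val - 1, h.2⟩ else 0)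
    else if j.val = n then
      (if h : 1 ≤ i.val ∧ i.val - 1 < n - 1 then 2 * x ⟨i.val - 1, h.2⟩ else 0)
    else 0

noncomputable def uMinusMat (n : ℕ) (x : Fin (n - 1) → ℝ) :
    Matrix (Fin (n + 1)) (Fin (n + 1)) ℝ :=
  Matrix.of fun i j =>
    if i = j then 1
    else if j.val = 0 then
      (if i.val = n then ∑ l, x l ^ 2
       else if h : 1 ≤ i.val ∧ i.val - 1 < n - 1 then 2 * x ⟨i.val - 1, h.2⟩ else 0)
    else if i.val = n then
      (if h : 1 ≤ j.val ∧ j.val - 1 < n - 1 then x ⟨j.val - 1, h.2⟩ else 0)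
    else 0

noncomputable def bMat (n : ℕ) (t : ℝ) : Matrix (Fin (n + 1)) (Fin (n + 1)) ℝ :=
  Matrix.diagonal fun i : Fin (n + 1) =>
    if i.val = 0 then Real.exp (2 * t)
    else if i.val = n then Real.exp (-(2 * t)) else 1

noncomputable def Qform (n : ℕ) (v : Fin (n + 1) → ℝ) : ℝ :=
  2 * v ⟨0, by omega⟩ * v ⟨n, by omega⟩ -
    ∑ j : Fin (n - 1), v ⟨j.val + 1, by have := j.isLt; omega⟩ ^ 2

noncomputable def mMat (n : ℕ) (k : Matrix (Fin (n - 1)) (Fin (n - 1)) ℝ) :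
    Matrix (Fin (n + 1)) (Fin (n + 1)) ℝ :=
  Matrix.of fun i j =>
    if i.val = 0 ∧ j.val = 0 then 1
    else if i.val = n ∧ j.val = n then 1
    else if h : 1 ≤ i.val ∧ i.val - 1 < n - 1 ∧ 1 ≤ j.val ∧ j.val - 1 < n - 1 then
      k ⟨i.val - 1, h.2.1⟩ ⟨j.val - 1, h.2.2.2⟩
    else 0

open Matrix

namespace Matrix

variable {R ι : Type*} [CommRing R] [Fintype ι] [DecidableEq ι]

theorem vecMul_mulVec_of_transpose_mul_self {k : Matrix ι ι R} (hk : kᵀ * k = 1)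
    (x : ι → R) :
    (k *ᵥ x) ᵥ* k = x := by
  rw [← vecMul_transpose, vecMul_vecMul, hk, vecMul_one]

theorem sum_sq_mulVec_of_transpose_mul_self {k : Matrix ι ι R} (hk : kᵀ * k = 1)
    (x : ι → R) :
    ∑ i, (k *ᵥ x) i ^ 2 = ∑ i, x i ^ 2 := by
  simp only [sq]
  change (k *ᵥ x) ⬝ᵥ (k *ᵥ x) = x ⬝ᵥ x
  rw [dotProduct_mulVec, vecMul_mulVec_of_transpose_mul_self hk]

end Matrix

section Blocks

variable {R ι : Type*} [CommRing R] [Fintype ι] [DecidableEq ι]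

def uBlocks (x : ι → R) : Matrix (Fin 2 ⊕ ι) (Fin 2 ⊕ ι) R :=
  fromBlocks !![1, ∑ i, x i ^ 2; 0, 1] (of ![x, 0]) (of fun i => ![0, 2 * x i]) 1

theorem fromBlocks_one_mul_uBlocks {k : Matrix ι ι R} (hk : kᵀ * k = 1) (x : ι → R) :
    fromBlocks 1 0 0 k * uBlocks x = uBlocks (k *ᵥ x) * fromBlocks 1 0 0 k := by
  simp only [uBlocks, fromBlocks_multiply, sum_sq_mulVec_of_transpose_mul_self hk]
  congr 1
  · simp
  · ext a i; fin_cases a <;> simp [vecMul_mulVec_of_transpose_mul_self hk]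
  · ext i a; fin_cases a <;> simp [mul_apply, mulVec, dotProduct, Finset.mul_sum, mul_left_comm]
  · simp

end Blocks

noncomputable def endsMidEquiv (n : ℕ) (hn : 1 ≤ n) : Fin 2 ⊕ Fin (n - 1) ≃ Fin (n + 1) :=
  Equiv.ofBijective (Sum.elim ![0, Fin.last n] fun b => ⟨b + 1, by omega⟩) <| by
    refine (Fintype.bijective_iff_injective_and_card _).2 ⟨?_, by simp; omega⟩
    rintro (a | a) (b | b) h <;> (try fin_cases a) <;> (try fin_cases b) <;>
      simp [Fin.ext_iff] at h ⊢ <;> omega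

theorem mMat_submatrix_endsMidEquiv {n : ℕ} (hn : 1 ≤ n)
    (k : Matrix (Fin (n - 1)) (Fin (n - 1)) ℝ) :
    (mMat n k).submatrix (endsMidEquiv n hn) (endsMidEquiv n hn) = fromBlocks 1 0 0 k := by
  have hn0 : n ≠ 0 := by omega
  have hb (b : Fin (n - 1)) : (b : ℕ) + 1 ≠ n := by omega
  ext (a | a) (b | b) <;> (try fin_cases a) <;> (try fin_cases b) <;>
    simp [mMat, endsMidEquiv, hn0, hn0.symm, hb, one_apply]

theorem uMat_submatrix_endsMidEquiv {n : ℕ} (hn : 1 ≤ n) (x : Fin (n - 1) → ℝ) :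
    (uMat n x).submatrix (endsMidEquiv n hn) (endsMidEquiv n hn) = uBlocks x := by
  have hn0 : n ≠ 0 := by omega
  have hb (b : Fin (n - 1)) : (b : ℕ) + 1 ≠ n := by omega
  ext (a | a) (b | b) <;> (try fin_cases a) <;> (try fin_cases b) <;>
    simp [uMat, uBlocks, endsMidEquiv, hn0, hn0.symm, hb, fun b => (hb b).symm, one_apply,
      Fin.ext_iff, -Fin.val_eq_zero_iff]

theorem stmt_6_general (n : ℕ) (hn : 2 ≤ n) (k : Matrix (Fin (n - 1)) (Fin (n - 1)) ℝ)
    (hk : k ∈ Matrix.orthogonalGroup (Fin (n - 1)) ℝ)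
    (x : Fin (n - 1) → ℝ) :
    mMat n k * uMat n x * (mMat n k)⁻¹ = uMat n (k *ᵥ x) := by
  have hkk : kᵀ * k = 1 := (mem_orthogonalGroup_iff' _ _).1 hk
  set e := endsMidEquiv n (by omega)
  have hm : (mMat n k).submatrix e e = fromBlocks 1 0 0 k := mMat_submatrix_endsMidEquiv _ k
  have hu (y : Fin (n - 1) → ℝ) : (uMat n y).submatrix e e = uBlocks y :=
    uMat_submatrix_endsMidEquiv _ y
  have hcomm : mMat n k * uMat n x = uMat n (k *ᵥ x) * mMat n k := by
    apply (reindex e.symm e.symm).injective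
    simp only [reindex_apply, Equiv.symm_symm, ← submatrix_mul_equiv _ _ _ e, hm, hu]
    exact fromBlocks_one_mul_uBlocks hkk x
  have hdet : IsUnit (mMat n k).det := by
    rw [← det_submatrix_equiv_self e, hm, det_fromBlocks_zero₂₁, det_one, one_mul]
    exact isUnit_det_of_left_inverse hkk
  rw [hcomm, mul_nonsing_inv_cancel_right _ _ hdet]

theorem stmt_6 (n : ℕ) (hn : 2 ≤ n) (k : Matrix (Fin (n - 1)) (Fin (n - 1)) ℝ)
    (hk : k ∈ Matrix.orthogonalGroup (Fin (n - 1)) ℝ) (hkdet : k.det = 1)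
    (x : Fin (n - 1) → ℝ) :
    mMat n k * uMat n x * (mMat n k)⁻¹ = uMat n (k *ᵥ x) :=
  stmt_6_general n hn k hk x
end

section
/- Let V be a finite-dimensional real vector space with a representation of SL(2,ℝ), and suppose V = ⨁_{ω∈ℝ} V^ω(B) is the eigenspace decomposition for B = {b(t) = diag(e^t,e^{-t})}, i.e., V^ω(B) = {v : b(t)v = e^{ωt}v for all t}. For nonzero v, let ω_max(v) = max{ω : the V^ω-component of v is nonzero}. Then for every r ≠ 0 and every nonzero v ∈ V, ω_max(u(r)·v) ≥ −ω_max(v), where u(r) = [[1,r],[0,1]]. In particular, if ω_max(v) < 0 then ω_max(u(r)v) > 0 for all r ≠ 0. -/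
/-!
Let `x` have weight `μ`. Since `b(t) u(s) b(-t) = u(e^{2t} s)`, the weight-`γ` component of
`u(sσ) x` is `σ^{(γ-μ)/2}` times that of `u(s) x` for every `σ > 0`. Writing
`u(sσ) x = u(s) u(-s(1-σ)) x` and expanding `u(-s(1-σ)) x` in the same way shows that this
component stays bounded as `σ → 0⁺`; for `γ < μ` the factor `σ^{(γ-μ)/2}` blows up, so the component
vanishes. Hence `u(s)` never lowers weights and, symmetrically, `ℓ(s) = u(s)ᵀ` never raises them.
This replaces the usual Lie algebra argument, so no continuity of the representation is needed.

The Weyl element `w = u(r) ℓ(-1/r) u(r)` satisfies `b(t) w = w b(-t)`, so it negates weights. The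
vector `z = ℓ(-1/r) u(r) v` has weights `≤ ω_max(u(r) v)`, and `z = u(-r) (w v)` has weights
`≥ -ω_max(v)`. As `z ≠ 0`, the two bounds force `-ω_max(v) ≤ ω_max(u(r) v)`.
-/

open DirectSum Real Matrix MatrixGroups

namespace DirectSum

section Proj

variable {ι R M : Type*} [DecidableEq ι] [CommSemiring R] [AddCommMonoid M] [Module R M]
variable (ℳ : ι → Submodule R M) [Decomposition ℳ]

noncomputable def decomposeProj (i : ι) : M →ₗ[R] M :=
  (ℳ i).subtype ∘ₗ component R ι (ℳ ·) i ∘ₗ (decomposeLinearEquiv ℳ).toLinearMap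

variable {ℳ}

theorem decomposeProj_apply (i : ι) (x : M) : decomposeProj ℳ i x = decompose ℳ x i := rfl

theorem decomposeProj_mem (i : ι) (x : M) : decomposeProj ℳ i x ∈ ℳ i :=
  (decompose ℳ x i).2

theorem decomposeProj_of_mem_same {i : ι} {x : M} (hx : x ∈ ℳ i) : decomposeProj ℳ i x = x :=
  decompose_of_mem_same ℳ hx

theorem decomposeProj_of_mem_ne {i j : ι} {x : M} (hx : x ∈ ℳ i) (hij : i ≠ j) :
    decomposeProj ℳ j x = 0 :=
  decompose_of_mem_ne ℳ hx hij

open scoped Classical in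
theorem sum_decomposeProj (x : M) :
    ∑ i ∈ (decompose ℳ x).support, decomposeProj ℳ i x = x :=
  sum_support_decompose ℳ x

theorem decomposeProj_eq_zero_of_notMem_support [∀ (i) (x : ℳ i), Decidable (x ≠ 0)] {i : ι}
    {x : M} (hi : i ∉ (decompose ℳ x).support) : decomposeProj ℳ i x = 0 := by
  rw [decomposeProj_apply, DFinsupp.notMem_support_iff.mp hi, ZeroMemClass.coe_zero]

open scoped Classical in
theorem sum_decomposeProj_of_forall_notMem {S : Finset ι} {x : M}
    (hS : ∀ i ∉ S, decomposeProj ℳ i x = 0) : ∑ i ∈ S, decomposeProj ℳ i x = x := by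
  conv_rhs => rw [← sum_decomposeProj (ℳ := ℳ) x]
  refine (Finset.sum_subset (fun i hi => ?_) fun i _ hi => ?_).symm
  · by_contra hiS
    exact DFinsupp.mem_support_iff.mp hi (Subtype.ext (hS i hiS))
  · exact decomposeProj_eq_zero_of_notMem_support hi

theorem mem_biSup_of_decomposeProj_eq_zero {p : ι → Prop} {x : M}
    (h : ∀ i, ¬ p i → decomposeProj ℳ i x = 0) : x ∈ ⨆ (i) (_ : p i), ℳ i := by
  classical
  rw [← sum_decomposeProj (ℳ := ℳ) x]
  refine Submodule.sum_mem _ fun i _ => ?_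
  by_cases hi : p i
  · exact Submodule.mem_iSup_of_mem i (Submodule.mem_iSup_of_mem hi (decomposeProj_mem i x))
  · rw [h i hi]
    exact zero_mem _

theorem decomposeProj_apply_of_forall_mem {T : M →ₗ[R] M} {c : ι → R}
    (hT : ∀ j, ∀ y ∈ ℳ j, T y = c j • y) (i : ι) (x : M) :
    decomposeProj ℳ i (T x) = c i • decomposeProj ℳ i x := by
  suffices decomposeProj ℳ i ∘ₗ T = c i • decomposeProj ℳ i from LinearMap.congr_fun this x
  refine decompose_lhom_ext ℳ fun j => LinearMap.ext fun ⟨y, hy⟩ => ?_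
  simp only [LinearMap.comp_apply, Submodule.subtype_apply, LinearMap.smul_apply, hT j y hy,
    map_smul]
  obtain rfl | hji := eq_or_ne j i
  · rw [decomposeProj_of_mem_same hy]
  · rw [decomposeProj_of_mem_ne hy hji, smul_zero, smul_zero]

end Proj

theorem mem_of_apply_eq_smul {ι K M : Type*} [DecidableEq ι] [Field K] [AddCommGroup M]
    [Module K M] {ℳ : ι → Submodule K M} [Decomposition ℳ]
    {T : M →ₗ[K] M} {c : ι → K} (hc : Function.Injective c)
    (hT : ∀ j, ∀ y ∈ ℳ j, T y = c j • y) {i : ι} {x : M} (hx : T x = c i • x) : x ∈ ℳ i := by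
  have hproj : ∀ j, ¬ j = i → decomposeProj ℳ j x = 0 := fun j hji => by
    have h := decomposeProj_apply_of_forall_mem hT j x
    rw [hx, map_smul, eq_comm, ← sub_eq_zero, ← sub_smul] at h
    exact (smul_eq_zero.mp h).resolve_left (sub_ne_zero.mpr (hc.ne hji))
  simpa using mem_biSup_of_decomposeProj_eq_zero hproj

end DirectSum

open Filter Topology in
theorem eq_zero_of_rpow_smul_eq_sum {ι V : Type*} [AddCommGroup V] [Module ℝ V] {p : ℝ}
    (hp : p < 0) {c : V} (S : Finset ι) (q : ι → ℝ) (d : ι → V)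
    (h : ∀ σ ∈ Set.Ioo (0 : ℝ) 1, σ ^ p • c = ∑ i ∈ S, (1 - σ) ^ q i • d i) : c = 0 := by
  by_contra hc
  obtain ⟨φ, hφ⟩ := Module.Projective.exists_dual_ne_zero ℝ hc
  have hcont : ContinuousAt (fun σ : ℝ => ∑ i ∈ S, (1 - σ) ^ q i * φ (d i)) 0 := by
    fun_prop (disch := norm_num)
  have heq : (fun σ : ℝ => ∑ i ∈ S, (1 - σ) ^ q i * φ (d i)) =ᶠ[𝓝[>] 0] fun σ => σ ^ p * φ c := by
    filter_upwards [Ioo_mem_nhdsGT one_pos] with σ hσ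
    simpa using congrArg φ (h σ hσ).symm
  exact not_tendsto_nhds_of_tendsto_atTop (tendsto_rpow_neg_nhdsGT_zero hp) _
    ((((hcont.tendsto.mono_left nhdsWithin_le_nhds).congr' heq).div_const (φ c)).congr
      fun σ => mul_div_cancel_right₀ _ hφ)

section NonLowering

variable {V : Type*} [AddCommGroup V] [Module ℝ V] {Vw : ℝ → Submodule ℝ V} [Decomposition Vw]
  {A N : ℝ → Module.End ℝ V} {κ : ℝ}
  (hA : ∀ ω, ∀ x ∈ Vw ω, ∀ t, A t x = exp (ω * t) • x)
  (hAN : ∀ t s, A t * N s = N (s * exp (κ * t)) * A t)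
include hA hAN

theorem decomposeProj_apply_mul_rpow (hκ : κ ≠ 0) {β : ℝ} {y : V} (hy : y ∈ Vw β) (γ s : ℝ)
    {σ : ℝ} (hσ : 0 < σ) :
    decomposeProj Vw γ (N (s * σ) y) = σ ^ ((γ - β) / κ) • decomposeProj Vw γ (N s y) := by
  set t := log σ / κ
  have hσt : exp (κ * t) = σ := by rw [mul_div_cancel₀ _ hκ, exp_log hσ]
  have hconj := congrArg (decomposeProj Vw γ) (LinearMap.congr_fun (hAN t s) y)
  rw [Module.End.mul_apply, Module.End.mul_apply, hA β y hy, map_smul, map_smul, hσt,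
    decomposeProj_apply_of_forall_mem (fun ω x hx => hA ω x hx t)] at hconj
  rw [rpow_def_of_pos hσ, ← smul_right_inj (exp_pos (β * t)).ne', ← hconj, smul_smul,
    ← exp_add]
  congr 2
  simp only [t]
  field_simp
  ring

theorem decomposeProj_apply_eq_zero_of_div_neg (hN : ∀ s₁ s₂, N (s₁ + s₂) = N s₁ * N s₂)
    {μ γ : ℝ} (hγ : (γ - μ) / κ < 0) {x : V} (hx : x ∈ Vw μ) (s : ℝ) :
    decomposeProj Vw γ (N s x) = 0 := by
  classical
  have hκ : κ ≠ 0 := by rintro rfl; simp at hγ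
  have hscale : ∀ β s {σ : ℝ}, 0 < σ →
      decomposeProj Vw β (N (s * σ) x) = σ ^ ((β - μ) / κ) • decomposeProj Vw β (N s x) :=
    fun β s _ hσ => decomposeProj_apply_mul_rpow hA hAN hκ hx β s hσ
  set y := N (-s) x
  refine eq_zero_of_rpow_smul_eq_sum hγ (decompose Vw y).support (fun β => (β - μ) / κ)
    (fun β => decomposeProj Vw γ (N s (decomposeProj Vw β y))) fun σ ⟨hσ₀, hσ₁⟩ => ?_
  have h1σ : 0 < 1 - σ := sub_pos.mpr hσ₁
  have hcomp : ∀ β, decomposeProj Vw β (N (-s * (1 - σ)) x) =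
      (1 - σ) ^ ((β - μ) / κ) • decomposeProj Vw β y := fun β => hscale β (-s) h1σ
  have hz : N (-s * (1 - σ)) x = ∑ β ∈ (decompose Vw y).support,
      (1 - σ) ^ ((β - μ) / κ) • decomposeProj Vw β y := by
    rw [← sum_decomposeProj_of_forall_notMem (x := N (-s * (1 - σ)) x)
      (S := (decompose Vw y).support) fun β hβ => by
        rw [hcomp, decomposeProj_eq_zero_of_notMem_support hβ, smul_zero]]
    exact Finset.sum_congr rfl fun β _ => hcomp β
  calc σ ^ ((γ - μ) / κ) • decomposeProj Vw γ (N s x)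
      = decomposeProj Vw γ (N (s * σ) x) := (hscale γ s hσ₀).symm
    _ = decomposeProj Vw γ (N s (N (-s * (1 - σ)) x)) := by
        rw [← Module.End.mul_apply (N s), ← hN, show s + -s * (1 - σ) = s * σ by ring]
    _ = _ := by simp only [hz, map_sum, map_smul]

end NonLowering

def upperUnipotent (s : ℝ) : SL(2, ℝ) := ⟨!![1, s; 0, 1], by simp⟩

def lowerUnipotent (s : ℝ) : SL(2, ℝ) := ⟨!![1, 0; s, 1], by simp⟩

noncomputable def diagExp (t : ℝ) : SL(2, ℝ) :=
  ⟨!![exp t, 0; 0, exp (-t)], by simp [← exp_add]⟩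

noncomputable def weylElement (r : ℝ) : SL(2, ℝ) :=
  upperUnipotent r * lowerUnipotent (-r⁻¹) * upperUnipotent r

@[simp] theorem coe_upperUnipotent (s : ℝ) :
    (upperUnipotent s : Matrix (Fin 2) (Fin 2) ℝ) = !![1, s; 0, 1] := rfl

@[simp] theorem coe_lowerUnipotent (s : ℝ) :
    (lowerUnipotent s : Matrix (Fin 2) (Fin 2) ℝ) = !![1, 0; s, 1] := rfl

@[simp] theorem coe_diagExp (t : ℝ) :
    (diagExp t : Matrix (Fin 2) (Fin 2) ℝ) = !![exp t, 0; 0, exp (-t)] := rfl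

theorem upperUnipotent_add (s₁ s₂ : ℝ) :
    upperUnipotent (s₁ + s₂) = upperUnipotent s₁ * upperUnipotent s₂ :=
  Subtype.ext <| by simp [add_comm]

theorem lowerUnipotent_add (s₁ s₂ : ℝ) :
    lowerUnipotent (s₁ + s₂) = lowerUnipotent s₁ * lowerUnipotent s₂ :=
  Subtype.ext <| by simp

theorem upperUnipotent_zero : upperUnipotent 0 = 1 :=
  Subtype.ext <| by simp [one_fin_two]

theorem diagExp_mul_upperUnipotent (t s : ℝ) :
    diagExp t * upperUnipotent s = upperUnipotent (s * exp (2 * t)) * diagExp t := by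
  have : exp (2 * t) * exp (-t) = exp t := by rw [← exp_add]; ring_nf
  exact Subtype.ext <| by simp [mul_assoc, this, mul_comm _ s]

theorem diagExp_mul_lowerUnipotent (t s : ℝ) :
    diagExp t * lowerUnipotent s = lowerUnipotent (s * exp (-2 * t)) * diagExp t := by
  have : exp (-(2 * t)) * exp t = exp (-t) := by rw [← exp_add]; ring_nf
  exact Subtype.ext <| by simp [mul_assoc, this, mul_comm _ s]

theorem coe_weylElement {r : ℝ} (hr : r ≠ 0) :
    (weylElement r : Matrix (Fin 2) (Fin 2) ℝ) = !![0, r; -r⁻¹, 0] := by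
  simp [weylElement, hr]

theorem diagExp_mul_weylElement {r : ℝ} (hr : r ≠ 0) (t : ℝ) :
    diagExp t * weylElement r = weylElement r * diagExp (-t) :=
  Subtype.ext <| by simp [coe_weylElement hr, mul_comm]

theorem upperUnipotent_neg_mul_weylElement (r : ℝ) :
    upperUnipotent (-r) * weylElement r = lowerUnipotent (-r⁻¹) * upperUnipotent r := by
  rw [weylElement, ← mul_assoc, ← mul_assoc, ← upperUnipotent_add, neg_add_cancel,
    upperUnipotent_zero, one_mul]

theorem Submodule.apply_mem_biSup {ι R M : Type*} [Semiring R] [AddCommMonoid M] [Module R M]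
    {ℳ : ι → Submodule R M} {p q : ι → Prop} (f : M →ₗ[R] M)
    (h : ∀ i, p i → ∀ x ∈ ℳ i, f x ∈ ⨆ (j) (_ : q j), ℳ j) {x : M}
    (hx : x ∈ ⨆ (i) (_ : p i), ℳ i) : f x ∈ ⨆ (j) (_ : q j), ℳ j :=
  (iSup₂_le fun i hi y hy => h i hi y hy : ⨆ (i) (_ : p i), ℳ i ≤ (⨆ (j) (_ : q j), ℳ j).comap f) hx

theorem iSupIndep_of_forall_mem_apply_eq_smul {ι K M : Type*} [Field K] [AddCommGroup M]
    [Module K M] {ℳ : ι → Submodule K M} {T : Module.End K M} {c : ι → K}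
    (hc : Function.Injective c) (hT : ∀ i, ∀ x ∈ ℳ i, T x = c i • x) : iSupIndep ℳ :=
  ((Module.End.eigenspaces_iSupIndep T).comp hc).mono fun i x hx =>
    Module.End.mem_eigenspace_iff.mpr (hT i x hx)

section Representation

variable {V : Type*} [AddCommGroup V] [Module ℝ V] (Vw : ℝ → Submodule ℝ V)

def weightsLE (a : ℝ) : Submodule ℝ V := ⨆ (ω) (_ : ω ≤ a), Vw ω

def weightsGE (a : ℝ) : Submodule ℝ V := ⨆ (ω) (_ : a ≤ ω), Vw ω

variable {Vw}

theorem disjoint_weightsLE_weightsGE (hVw : iSupIndep Vw) {a b : ℝ} (hab : a < b) :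
    Disjoint (weightsLE Vw a) (weightsGE Vw b) :=
  hVw.disjoint_biSup_biSup (Set.Iic_disjoint_Ici.mpr hab.not_ge)

variable {ρ : SL(2, ℝ) →* Module.End ℝ V}
  (hρ : ∀ ω, ∀ x ∈ Vw ω, ∀ t, ρ (diagExp t) x = exp (ω * t) • x)
include hρ

theorem iSupIndep_of_apply_diagExp : iSupIndep Vw :=
  iSupIndep_of_forall_mem_apply_eq_smul (T := ρ (diagExp 1)) exp_injective
    fun ω x hx => by simpa using hρ ω x hx 1

variable [Decomposition Vw]

theorem apply_upperUnipotent_mem_weightsGE {a : ℝ} {x : V} (hx : x ∈ weightsGE Vw a) (s : ℝ) :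
    ρ (upperUnipotent s) x ∈ weightsGE Vw a := by
  refine Submodule.apply_mem_biSup _ (fun μ hμ y hy => ?_) hx
  refine mem_biSup_of_decomposeProj_eq_zero fun γ hγ => ?_
  refine decomposeProj_apply_eq_zero_of_div_neg (A := fun t => ρ (diagExp t))
    (N := fun s => ρ (upperUnipotent s)) (κ := 2) hρ (fun t s => ?_) (fun s₁ s₂ => ?_) ?_ hy s
  · simp only [← map_mul, diagExp_mul_upperUnipotent]
  · simp only [← map_mul, upperUnipotent_add]
  · linarith [not_le.mp hγ]

theorem apply_lowerUnipotent_mem_weightsLE {a : ℝ} {x : V} (hx : x ∈ weightsLE Vw a) (s : ℝ) :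
    ρ (lowerUnipotent s) x ∈ weightsLE Vw a := by
  refine Submodule.apply_mem_biSup _ (fun μ hμ y hy => ?_) hx
  refine mem_biSup_of_decomposeProj_eq_zero fun γ hγ => ?_
  refine decomposeProj_apply_eq_zero_of_div_neg (A := fun t => ρ (diagExp t))
    (N := fun s => ρ (lowerUnipotent s)) (κ := -2) hρ (fun t s => ?_) (fun s₁ s₂ => ?_) ?_ hy s
  · simp only [← map_mul, diagExp_mul_lowerUnipotent]
  · simp only [← map_mul, lowerUnipotent_add]
  · linarith [not_le.mp hγ]

theorem apply_weylElement_mem {r : ℝ} (hr : r ≠ 0) {ω : ℝ} {x : V} (hx : x ∈ Vw ω) :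
    ρ (weylElement r) x ∈ Vw (-ω) := by
  refine mem_of_apply_eq_smul (T := ρ (diagExp 1)) exp_injective
    (fun ω y hy => by simpa using hρ ω y hy 1) ?_
  rw [← Module.End.mul_apply, ← map_mul, diagExp_mul_weylElement hr, map_mul,
    Module.End.mul_apply, hρ ω x hx, map_smul, mul_neg_one]

theorem apply_weylElement_mem_weightsGE {r : ℝ} (hr : r ≠ 0) {a : ℝ} {x : V}
    (hx : x ∈ weightsLE Vw a) : ρ (weylElement r) x ∈ weightsGE Vw (-a) :=
  Submodule.apply_mem_biSup _ (fun ω hω _ hy => Submodule.mem_iSup_of_mem (-ω)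
    (Submodule.mem_iSup_of_mem (neg_le_neg hω) (apply_weylElement_mem hρ hr hy))) hx

end Representation

theorem stmt_14_general (V : Type) [AddCommGroup V] [Module ℝ V]
    (ρ : Matrix.SpecialLinearGroup (Fin 2) ℝ →* (V →ₗ[ℝ] V)ˣ)
    (Vw : ℝ → Submodule ℝ V)
    (hdecomp : (⨆ ω : ℝ, Vw ω) = ⊤)
    (hweight : ∀ (ω : ℝ) (w : V), w ∈ Vw ω →
      ∀ (t : ℝ) (b : Matrix.SpecialLinearGroup (Fin 2) ℝ),
        (b : Matrix (Fin 2) (Fin 2) ℝ) = !![Real.exp t, 0; 0, Real.exp (-t)] →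
        (↑(ρ b) : V →ₗ[ℝ] V) w = Real.exp (ω * t) • w)
    (v : V) (hv : v ≠ 0) (r : ℝ) (hr : r ≠ 0)
    (uel : Matrix.SpecialLinearGroup (Fin 2) ℝ)
    (huel : (uel : Matrix (Fin 2) (Fin 2) ℝ) = !![1, r; 0, 1])
    (ωv ωu : ℝ)
    (hv1 : v ∈ ⨆ (ω : ℝ) (_ : ω ≤ ωv), Vw ω)
    (hu1 : (↑(ρ uel) : V →ₗ[ℝ] V) v ∈ ⨆ (ω : ℝ) (_ : ω ≤ ωu), Vw ω) :
    -ωv ≤ ωu ∧ (ωv < 0 → 0 < ωu) := by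
  set R := (Units.coeHom (Module.End ℝ V)).comp ρ
  have hR : ∀ ω, ∀ x ∈ Vw ω, ∀ t, R (diagExp t) x = exp (ω * t) • x :=
    fun ω x hx t => hweight ω x hx t _ rfl
  have hVw := iSupIndep_of_apply_diagExp hR
  let : Decomposition Vw := IsInternal.chooseDecomposition Vw <|
    (isInternal_submodule_iff_iSupIndep_and_iSup_eq_top Vw).mpr ⟨hVw, hdecomp⟩
  obtain rfl : uel = upperUnipotent r := Subtype.ext huel
  have hmain : -ωv ≤ ωu := by
    by_contra! hlt
    set g := lowerUnipotent (-r⁻¹) * upperUnipotent r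
    have h_le : R g v ∈ weightsLE Vw ωu := by
      rw [map_mul, Module.End.mul_apply]
      exact apply_lowerUnipotent_mem_weightsLE hR hu1 _
    have h_ge : R g v ∈ weightsGE Vw (-ωv) := by
      rw [show g = _ from (upperUnipotent_neg_mul_weylElement r).symm, map_mul,
        Module.End.mul_apply]
      exact apply_upperUnipotent_mem_weightsGE hR (apply_weylElement_mem_weightsGE hR hr hv1) _
    have hz : R g v = 0 :=
      Submodule.disjoint_def.mp (disjoint_weightsLE_weightsGE hVw hlt) _ h_le h_ge
    apply hv
    rw [← Module.End.one_apply (R := ℝ) v, ← map_one R, ← inv_mul_cancel g, map_mul,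
      Module.End.mul_apply, hz, map_zero]
  exact ⟨hmain, fun h => by linarith⟩

theorem stmt_14 (V : Type) [AddCommGroup V] [Module ℝ V] [FiniteDimensional ℝ V]
    (ρ : Matrix.SpecialLinearGroup (Fin 2) ℝ →* (V →ₗ[ℝ] V)ˣ)
    (Vw : ℝ → Submodule ℝ V)
    (hdecomp : (⨆ ω : ℝ, Vw ω) = ⊤)
    (hweight : ∀ (ω : ℝ) (w : V), w ∈ Vw ω →
      ∀ (t : ℝ) (b : Matrix.SpecialLinearGroup (Fin 2) ℝ),
        (b : Matrix (Fin 2) (Fin 2) ℝ) = !![Real.exp t, 0; 0, Real.exp (-t)] →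
        (↑(ρ b) : V →ₗ[ℝ] V) w = Real.exp (ω * t) • w)
    (v : V) (hv : v ≠ 0) (r : ℝ) (hr : r ≠ 0)
    (uel : Matrix.SpecialLinearGroup (Fin 2) ℝ)
    (huel : (uel : Matrix (Fin 2) (Fin 2) ℝ) = !![1, r; 0, 1])
    (ωv ωu : ℝ)
    (hv1 : v ∈ ⨆ (ω : ℝ) (_ : ω ≤ ωv), Vw ω)
    (hv2 : v ∉ ⨆ (ω : ℝ) (_ : ω < ωv), Vw ω)
    (hu1 : (↑(ρ uel) : V →ₗ[ℝ] V) v ∈ ⨆ (ω : ℝ) (_ : ω ≤ ωu), Vw ω)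
    (hu2 : (↑(ρ uel) : V →ₗ[ℝ] V) v ∉ ⨆ (ω : ℝ) (_ : ω < ωu), Vw ω) :
    -ωv ≤ ωu ∧ (ωv < 0 → 0 < ωu) :=
  stmt_14_general V ρ Vw hdecomp hweight v hv r hr uel huel ωv ωu hv1 hu1
end
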